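/- Let X be a finite type with N elements and let r satisfy 1 ≤ r ≤ N. Let μ be the PMF on (X → Bool) × X obtained by drawing f uniformly from F^r(X) and then drawing x uniformly from the (nonempty) set {x : f x = true}, outputting (f, x). Let ρ be the PMF obtained by drawing g uniformly from F^{r-1}(X) and, independently, y uniformly from X, outputting (Function.update g y true, y). Then for every set E of pairs, |μ(E) − ρ(E)| ≤ (r − 1) / N. -/

import Mathlib

/-!
Every pair `(f, x)` in the support of `μ` (`f` of weight `r`, `f x = true`) is produced by `ρ`
from `g = f \ {x}` and `y = x`, so `ρ` gives it mass at least `1 / (C(N, r-1) N)`. Since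
`C(N, r) r = C(N, r-1) (N - r + 1)`, this is `1 - (r-1)/N` times its `μ`-mass `1 / (C(N, r) r)`,
and a pointwise domination `ρ ≥ c μ` of probability distributions bounds their total variation
distance by `1 - c`.
-/

open Finset
open scoped ENNReal

namespace PMF

variable {α : Type*}

theorem toOuterMeasure_add_compl (p : PMF α) (s : Set α) :
    p.toOuterMeasure s + p.toOuterMeasure sᶜ = 1 := by
  rw [toOuterMeasure_apply, toOuterMeasure_apply, ← ENNReal.tsum_add]
  simp_rw [Set.indicator_self_add_compl_apply]
  exact p.tsum_coe

theorem toOuterMeasure_ne_top (p : PMF α) (s : Set α) : p.toOuterMeasure s ≠ ∞ :=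
  ne_top_of_le_ne_top ENNReal.one_ne_top (p.toOuterMeasure_add_compl s ▸ le_self_add)

theorem toReal_toOuterMeasure_add_compl (p : PMF α) (s : Set α) :
    (p.toOuterMeasure s).toReal + (p.toOuterMeasure sᶜ).toReal = 1 := by
  rw [← ENNReal.toReal_add (p.toOuterMeasure_ne_top s) (p.toOuterMeasure_ne_top sᶜ),
    toOuterMeasure_add_compl, ENNReal.toReal_one]

theorem mul_toOuterMeasure_le {μ ρ : PMF α} {c : ℝ≥0∞} (h : ∀ a, c * μ a ≤ ρ a) (s : Set α) :
    c * μ.toOuterMeasure s ≤ ρ.toOuterMeasure s := by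
  rw [toOuterMeasure_apply, toOuterMeasure_apply, ← ENNReal.tsum_mul_left]
  refine ENNReal.tsum_le_tsum fun a => ?_
  by_cases ha : a ∈ s <;> simp [ha, h a]

/-- Applying `ρ ≥ c μ` to both `s` and `sᶜ` squeezes `ρ s` between `c μ s` and `1 - c (1 - μ s)`. -/
theorem abs_toReal_toOuterMeasure_sub_le {μ ρ : PMF α} {c : ℝ≥0∞} (hc : c ≤ 1)
    (h : ∀ a, c * μ a ≤ ρ a) (s : Set α) :
    |(μ.toOuterMeasure s).toReal - (ρ.toOuterMeasure s).toReal| ≤ 1 - c.toReal := by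
  have hreal (t : Set α) :
      c.toReal * (μ.toOuterMeasure t).toReal ≤ (ρ.toOuterMeasure t).toReal := by
    rw [← ENNReal.toReal_mul]
    exact ENNReal.toReal_mono (ρ.toOuterMeasure_ne_top t) (mul_toOuterMeasure_le h t)
  have hc₁ : c.toReal ≤ 1 := ENNReal.toReal_le_of_le_ofReal zero_le_one (by simpa using hc)
  have hμ := μ.toReal_toOuterMeasure_add_compl s
  have hρ := ρ.toReal_toOuterMeasure_add_compl s
  have hs := hreal s
  have hsc := hreal sᶜ
  have hμs : 0 ≤ (μ.toOuterMeasure s).toReal := ENNReal.toReal_nonneg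
  have hμsc : 0 ≤ (μ.toOuterMeasure sᶜ).toReal := ENNReal.toReal_nonneg
  rw [abs_le]
  constructor <;> nlinarith

end PMF

section BoolFun

variable {X : Type*} [Fintype X] [DecidableEq X]

variable (X) in
abbrev BoolFunOfWeight (t : ℕ) := {f : X → Bool // #{x | f x = true} = t}

def boolFunEquivFinset : (X → Bool) ≃ Finset X where
  toFun f := {x | f x = true}
  invFun s x := decide (x ∈ s)
  left_inv f := by ext x; simp
  right_inv s := by ext x; simp

theorem card_boolFunOfWeight (t : ℕ) :
    Fintype.card (BoolFunOfWeight X t) = (Fintype.card X).choose t := by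
  rw [← Fintype.card_finset_len]
  exact Fintype.card_congr (boolFunEquivFinset.subtypeEquiv fun _ => Iff.rfl)

theorem card_filter_update_false {f : X → Bool} {x : X} (hx : f x = true) :
    #{y | Function.update f x false y = true} = #{y | f y = true} - 1 := by
  rw [← card_erase_of_mem (by simpa using hx)]
  congr 1
  ext y
  rcases eq_or_ne y x with rfl | hy <;> simp [*]

noncomputable def uniformMarked (t : ℕ) [Nonempty (BoolFunOfWeight X t)]
    (hT : ∀ f : BoolFunOfWeight X t, Nonempty {x : X // f.1 x = true}) :
    PMF ((X → Bool) × X) :=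
  (PMF.uniformOfFintype (BoolFunOfWeight X t)).bind fun f =>
    (@PMF.uniformOfFintype {x : X // f.1 x = true} _ (hT f)).map fun x => (f.1, x.1)

noncomputable def insertMarked (t : ℕ) [Nonempty (BoolFunOfWeight X t)] [Nonempty X] :
    PMF ((X → Bool) × X) :=
  (PMF.uniformOfFintype (BoolFunOfWeight X t)).bind fun g =>
    (PMF.uniformOfFintype X).map fun y => (Function.update g.1 y true, y)

theorem uniformMarked_apply (t : ℕ) [Nonempty (BoolFunOfWeight X t)]
    (hT : ∀ f : BoolFunOfWeight X t, Nonempty {x : X // f.1 x = true}) (p : (X → Bool) × X) :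
    uniformMarked t hT p = if #{x | p.1 x = true} = t ∧ p.1 p.2 = true
      then (Fintype.card (BoolFunOfWeight X t) * t : ℝ≥0∞)⁻¹ else 0 := by
  rw [uniformMarked, PMF.bind_apply]
  split_ifs with hp
  · obtain ⟨hcard, hx⟩ := hp
    rw [tsum_eq_single ⟨p.1, hcard⟩, PMF.map_apply, tsum_eq_single ⟨p.2, hx⟩]
    · simp [PMF.uniformOfFintype_apply, Fintype.card_subtype, hcard, ENNReal.mul_inv]
    · intro x hx'
      exact if_neg fun h => hx' (Subtype.ext (congrArg Prod.snd h).symm)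
    · intro f hf
      rw [PMF.map_apply, ENNReal.tsum_eq_zero.2, mul_zero]
      exact fun x => if_neg fun h => hf (Subtype.ext (congrArg Prod.fst h).symm)
  · refine ENNReal.tsum_eq_zero.2 fun f => ?_
    rw [PMF.map_apply, ENNReal.tsum_eq_zero.2, mul_zero]
    intro x
    rw [if_neg]
    rintro rfl
    exact hp ⟨f.2, x.2⟩

theorem inv_card_mul_card_le_insertMarked_apply (t : ℕ) [Nonempty (BoolFunOfWeight X t)]
    [Nonempty X] {p : (X → Bool) × X} (hcard : #{x | p.1 x = true} = t + 1)
    (hx : p.1 p.2 = true) :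
    (Fintype.card (BoolFunOfWeight X t) * Fintype.card X : ℝ≥0∞)⁻¹ ≤ insertMarked t p := by
  let g : BoolFunOfWeight X t :=
    ⟨Function.update p.1 p.2 false, by rw [card_filter_update_false hx, hcard, Nat.add_sub_cancel]⟩
  have hpg : p = (Function.update g.1 p.2 true, p.2) := by
    rw [Function.update_idem, ← hx, Function.update_eq_self]
  calc (Fintype.card (BoolFunOfWeight X t) * Fintype.card X : ℝ≥0∞)⁻¹
      = PMF.uniformOfFintype _ g * PMF.uniformOfFintype X p.2 := by
        simp [PMF.uniformOfFintype_apply, ENNReal.mul_inv]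
    _ ≤ PMF.uniformOfFintype _ g *
          ((PMF.uniformOfFintype X).map fun y => (Function.update g.1 y true, y)) p := by
        gcongr
        rw [PMF.map_apply]
        exact le_of_eq_of_le (if_pos hpg).symm (ENNReal.le_tsum p.2)
    _ ≤ insertMarked t p := ENNReal.le_tsum g

theorem mul_uniformMarked_apply_le_insertMarked_apply (k : ℕ) (hk : k < Fintype.card X)
    [Nonempty (BoolFunOfWeight X (k + 1))] [Nonempty (BoolFunOfWeight X k)] [Nonempty X]
    (hT : ∀ f : BoolFunOfWeight X (k + 1), Nonempty {x : X // f.1 x = true})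
    (p : (X → Bool) × X) :
    ((Fintype.card X - k : ℕ) / Fintype.card X : ℝ≥0∞) * uniformMarked (k + 1) hT p
      ≤ insertMarked k p := by
  rw [uniformMarked_apply]
  split_ifs with hp
  · have hcount : Fintype.card (BoolFunOfWeight X (k + 1)) * (k + 1)
        = Fintype.card (BoolFunOfWeight X k) * (Fintype.card X - k) := by
      simp only [card_boolFunOfWeight]
      exact Nat.choose_succ_right_eq _ _
    have hNk : ((Fintype.card X - k : ℕ) : ℝ≥0∞) ≠ 0 :=
      Nat.cast_ne_zero.2 (Nat.sub_ne_zero_of_lt hk)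
    calc ((Fintype.card X - k : ℕ) / Fintype.card X : ℝ≥0∞)
          * (Fintype.card (BoolFunOfWeight X (k + 1)) * ((k + 1 : ℕ) : ℝ≥0∞))⁻¹
        = (((Fintype.card X - k : ℕ) : ℝ≥0∞) * ((Fintype.card X - k : ℕ) : ℝ≥0∞)⁻¹)
          * (Fintype.card (BoolFunOfWeight X k) * Fintype.card X : ℝ≥0∞)⁻¹ := by
          rw [← Nat.cast_mul, hcount, Nat.cast_mul, ENNReal.div_eq_inv_mul,
            ENNReal.mul_inv (by simp) (by simp), ENNReal.mul_inv (by simp) (by simp)]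
          ring
      _ = (Fintype.card (BoolFunOfWeight X k) * Fintype.card X : ℝ≥0∞)⁻¹ := by
          rw [ENNReal.mul_inv_cancel hNk (by simp), one_mul]
      _ ≤ insertMarked k p := inv_card_mul_card_le_insertMarked_apply k hp.1 hp.2
  · simp

end BoolFun
/-- the pair `(f, x)` with `f` uniform on `F^r(X)`, then `x` uniform on
`{x | f x = true}`, is within total-variation distance `(r-1)/N` of the pair
`(Function.update g y true, y)` with `g` uniform on `F^{r-1}(X)` and `y` uniform on `X`,
independently. -/
theorem stmt_6 (X : Type) [Fintype X] [DecidableEq X] (N r : ℕ)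
    (hN : Fintype.card X = N) (hr1 : 1 ≤ r) (hrN : r ≤ N)
    (hX : Nonempty X)
    (hF : Nonempty {f : X → Bool // (Finset.univ.filter fun x => f x = true).card = r})
    (hG : Nonempty {g : X → Bool // (Finset.univ.filter fun x => g x = true).card = r - 1})
    (hTf : ∀ f : {f : X → Bool // (Finset.univ.filter fun x => f x = true).card = r},
        Nonempty {x : X // f.1 x = true}) :
    let μ : PMF ((X → Bool) × X) :=
      (@PMF.uniformOfFintype
          {f : X → Bool // (Finset.univ.filter fun x => f x = true).card = r} _ hF).bind
        fun f => (@PMF.uniformOfFintype {x : X // f.1 x = true} _ (hTf f)).map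
          fun x => (f.1, x.1)
    let ρ : PMF ((X → Bool) × X) :=
      (@PMF.uniformOfFintype
          {g : X → Bool // (Finset.univ.filter fun x => g x = true).card = r - 1} _ hG).bind
        fun g => (@PMF.uniformOfFintype X _ hX).map
          fun y => (Function.update g.1 y true, y)
    ∀ E : Set ((X → Bool) × X),
      |(μ.toOuterMeasure E).toReal - (ρ.toOuterMeasure E).toReal|
        ≤ ((r - 1 : ℕ) : ℝ) / (N : ℝ) := by
  intro μ ρ E
  obtain ⟨k, rfl⟩ := Nat.exists_eq_add_of_le' hr1
  subst hN
  have hk : k < Fintype.card X := hrN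
  have hc : ((Fintype.card X - k : ℕ) / Fintype.card X : ℝ≥0∞) ≤ 1 :=
    ENNReal.div_le_of_le_mul (by simp)
  have hμ : μ = uniformMarked (k + 1) hTf := rfl
  have : Nonempty (BoolFunOfWeight X k) := hG
  have hρ : ρ = insertMarked k := rfl
  rw [hμ, hρ]
  refine (PMF.abs_toReal_toOuterMeasure_sub_le hc
    (mul_uniformMarked_apply_le_insertMarked_apply k hk hTf) E).trans_eq ?_
  rw [ENNReal.toReal_div, ENNReal.toReal_natCast, ENNReal.toReal_natCast, Nat.cast_sub hk.le,
    Nat.add_sub_cancel]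
  field_simp
  ring
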